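/- arXiv:1304.7577 — 3 statements merged into one kernel-verified Lean document; each statement's English description precedes it below -/
import Mathlib

section
/- If the prediction strategy b̃_t(s) = (E_U[f(s·1·U)] − E_U[f(s·(−1)·U)])/2 is used, then for every prefix s of length t−1, the conditional expected final payoff plus the conditional expectation of f over random completions satisfies: E_U[payoff on s·b·U from time t onward] − E_U[f(s·b·U)] is the same for b = 1 and b = −1; consequently by backward induction the algorithm's payoff on any full sequence b is at least f(b) − E_S[f(S)]. -/
/-- Map a Boolean bit to `±1`. -/
def pmOne (c : Bool) : ℝ := if c then 1 else -1

/-- Extend a prefix `p` of length `t` by one bit `c` and a suffix `u` to a full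
length-`T` sequence. -/
def extSeq (T t : ℕ) (ht : t < T) (p : Fin t → Bool) (c : Bool)
    (u : Fin (T - t - 1) → Bool) : Fin T → Bool := fun i =>
  if h : (i : ℕ) < t then p ⟨i, h⟩
  else if h2 : (i : ℕ) = t then c
  else u ⟨(i : ℕ) - t - 1, by have := i.isLt; omega⟩

/-- `E_U[f(p · c · U)]`: expectation of `f` over a uniformly random completion of the
prefix `p` followed by the bit `c`. -/
noncomputable def condE (T : ℕ) (f : (Fin T → Bool) → ℝ) (t : ℕ) (ht : t < T) (p : Fin t → Bool)
    (c : Bool) : ℝ :=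
  (∑ u : Fin (T - t - 1) → Bool, f (extSeq T t ht p c u)) / 2 ^ (T - t - 1)

/-- Cover's prediction strategy `b̃_t(p) = (E_U[f(p·1·U)] - E_U[f(p·(-1)·U)])/2`. -/
noncomputable def coverStrat (T : ℕ) (f : (Fin T → Bool) → ℝ) (t : Fin T)
    (p : Fin (t : ℕ) → Bool) : ℝ :=
  (condE T f t t.isLt p true - condE T f t t.isLt p false) / 2

/-- Payoff of the Cover strategy on a full sequence `b`. -/
noncomputable def coverPayoff (T : ℕ) (f : (Fin T → Bool) → ℝ) (b : Fin T → Bool) : ℝ :=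
  ∑ t : Fin T, pmOne (b t) * coverStrat T f t (fun s => b (Fin.castLE t.isLt.le s))

/-- `E_U[payoff from time t onward on p · c · U]` for the Cover strategy. -/
noncomputable def condFuturePayoff (T : ℕ) (f : (Fin T → Bool) → ℝ) (t : ℕ) (ht : t < T)
    (p : Fin t → Bool) (c : Bool) : ℝ :=
  (∑ u : Fin (T - t - 1) → Bool, ∑ r : Fin T,
      if t ≤ (r : ℕ) then
        pmOne (extSeq T t ht p c u r) *
          coverStrat T f r (fun s => extSeq T t ht p c u (Fin.castLE r.isLt.le s))
      else 0) / 2 ^ (T - t - 1)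

/-! The mean `condMean f b t` of `f` over the sequences that agree with `b` before time `t` is a
martingale along `b`, and Cover's bet at time `t` gains exactly its increment
`condMean f b (t + 1) - condMean f b t`: the bet is half the gap between the two values the mean can
move to, which lie symmetrically about the current one. Hence the payoff from time `t` on telescopes
to `f b - condMean f b t`. Averaging over completions of `p · c`, the expected future payoff is
`E[f(p · c · U)]` minus a quantity that depends only on `p`, and at `t = 0` the total payoff is
`f b - E[f]`. -/

section CoverStrategy

variable {T : ℕ}

open Finset

lemma extSeq_of_lt (t : ℕ) (ht : t < T) (p : Fin t → Bool) (c : Bool)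
    (u : Fin (T - t - 1) → Bool) (i : Fin T) (hi : (i : ℕ) < t) :
    extSeq T t ht p c u i = p ⟨i, hi⟩ := by
  simp [extSeq, hi]

lemma extSeq_self (t : ℕ) (ht : t < T) (p : Fin t → Bool) (c : Bool)
    (u : Fin (T - t - 1) → Bool) : extSeq T t ht p c u ⟨t, ht⟩ = c := by
  simp [extSeq]

lemma extSeq_add (t : ℕ) (ht : t < T) (p : Fin t → Bool) (c : Bool)
    (u : Fin (T - t - 1) → Bool) (j : Fin (T - t - 1)) :
    extSeq T t ht p c u ⟨t + 1 + j, by omega⟩ = u j := by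
  simp only [extSeq, dif_neg (show ¬ t + 1 + (j : ℕ) < t by omega),
    dif_neg (show t + 1 + (j : ℕ) ≠ t by omega)]
  congr 1
  ext
  simp only
  omega

lemma extSeq_castLE (t : ℕ) (ht : t < T) (p : Fin t → Bool) (c : Bool)
    (u : Fin (T - t - 1) → Bool) : (fun i => extSeq T t ht p c u (Fin.castLE ht.le i)) = p := by
  funext i
  simp [extSeq]

lemma sum_extSeq {M : Type*} [AddCommMonoid M] (g : (Fin T → Bool) → M) (t : ℕ) (ht : t < T)
    (p : Fin t → Bool) (c : Bool) :
    ∑ u, g (extSeq T t ht p c u) =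
      ∑ s with (∀ (i : Fin T) (hi : (i : ℕ) < t), s i = p ⟨i, hi⟩) ∧ s ⟨t, ht⟩ = c, g s := by
  refine sum_nbij' (extSeq T t ht p c) (fun s j => s ⟨t + 1 + j, by omega⟩)
    (fun u _ => mem_filter.2 ⟨mem_univ _, extSeq_of_lt t ht p c u, extSeq_self t ht p c u⟩)
    (fun _ _ => mem_univ _) (fun u _ => funext (extSeq_add t ht p c u)) ?_ (fun _ _ => rfl)
  intro s hs
  obtain ⟨hp, hc⟩ := (mem_filter.1 hs).2
  funext i
  unfold extSeq
  split_ifs with h1 h2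
  · exact (hp i h1).symm
  · rw [← hc]
    exact congrArg s (Fin.ext h2.symm)
  · dsimp only
    congr 1
    ext
    simp only
    omega

variable (f : (Fin T → Bool) → ℝ)

-- Defined for every `t : ℕ` (equal to `f b` once `T ≤ t`), so that it telescopes over `range T`.
noncomputable def condMean (b : Fin T → Bool) (t : ℕ) : ℝ :=
  (∑ s with ∀ i : Fin T, (i : ℕ) < t → s i = b i, f s) / 2 ^ (T - t)

lemma condMean_zero (b : Fin T → Bool) : condMean f b 0 = (∑ s, f s) / 2 ^ T := by
  simp [condMean]

lemma condMean_self (b : Fin T → Bool) : condMean f b T = f b := by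
  simp [condMean, ← funext_iff, filter_eq']

lemma condE_castLE (t : ℕ) (ht : t < T) (b : Fin T → Bool) (c : Bool) :
    condE T f t ht (fun i => b (Fin.castLE ht.le i)) c =
      (∑ s with (∀ i : Fin T, (i : ℕ) < t → s i = b i) ∧ s ⟨t, ht⟩ = c, f s) /
        2 ^ (T - t - 1) := by
  simp [condE, sum_extSeq]

lemma condMean_succ (t : ℕ) (ht : t < T) (b : Fin T → Bool) :
    condMean f b (t + 1) = condE T f t ht (fun i => b (Fin.castLE ht.le i)) (b ⟨t, ht⟩) := by
  have hb : ∀ s : Fin T → Bool, (∀ i : Fin T, (i : ℕ) < t + 1 → s i = b i) ↔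
      (∀ i : Fin T, (i : ℕ) < t → s i = b i) ∧ s ⟨t, ht⟩ = b ⟨t, ht⟩ := by
    intro s
    refine ⟨fun h => ⟨fun i hi => h i (by omega), h _ (by simp)⟩, fun ⟨h, hs⟩ i hi => ?_⟩
    rcases Nat.lt_succ_iff_lt_or_eq.mp hi with hi | hi
    · exact h i hi
    · obtain rfl : i = ⟨t, ht⟩ := Fin.ext hi
      exact hs
  rw [condMean, condE_castLE, Nat.sub_sub]
  simp only [hb]

lemma condMean_eq_avg_condE (t : ℕ) (ht : t < T) (b : Fin T → Bool) :
    condMean f b t = (condE T f t ht (fun i => b (Fin.castLE ht.le i)) true +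
      condE T f t ht (fun i => b (Fin.castLE ht.le i)) false) / 2 := by
  rw [condMean, condE_castLE, condE_castLE,
    ← sum_filter_add_sum_filter_not _ (fun s => s ⟨t, ht⟩ = true), filter_filter, filter_filter]
  simp only [Bool.not_eq_true]
  have h2 : (2 : ℝ) ^ (T - t) = 2 ^ (T - t - 1) * 2 := by
    rw [← pow_succ]
    congr 1
    omega
  rw [h2]
  ring

lemma pmOne_mul_coverStrat (b : Fin T → Bool) (r : Fin T) :
    pmOne (b r) * coverStrat T f r (fun s => b (Fin.castLE r.isLt.le s)) =
      condMean f b (r + 1) - condMean f b r := by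
  rw [condMean_succ f r r.isLt, condMean_eq_avg_condE f r r.isLt, coverStrat]
  cases b r <;> simp [pmOne] <;> ring

lemma sum_payoff_from (t : ℕ) (ht : t ≤ T) (b : Fin T → Bool) :
    (∑ r : Fin T, if t ≤ (r : ℕ) then
        pmOne (b r) * coverStrat T f r (fun s => b (Fin.castLE r.isLt.le s)) else 0) =
      f b - condMean f b t := by
  simp only [pmOne_mul_coverStrat]
  rw [Fin.sum_univ_eq_sum_range (fun r => if t ≤ r then condMean f b (r + 1) - condMean f b r
    else 0), ← sum_filter, range_eq_Ico, Ico_filter_le_of_left_le (Nat.zero_le t),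
    sum_Ico_sub _ ht, condMean_self]

lemma condFuturePayoff_eq (t : ℕ) (ht : t < T) (p : Fin t → Bool) (c : Bool) :
    condFuturePayoff T f t ht p c =
      condE T f t ht p c - (condE T f t ht p true + condE T f t ht p false) / 2 := by
  have hsum : ∀ u, (∑ r : Fin T, if t ≤ (r : ℕ) then
      pmOne (extSeq T t ht p c u r) *
        coverStrat T f r (fun s => extSeq T t ht p c u (Fin.castLE r.isLt.le s)) else 0) =
      f (extSeq T t ht p c u) - (condE T f t ht p true + condE T f t ht p false) / 2 := by
    intro u
    rw [sum_payoff_from f t ht.le, condMean_eq_avg_condE f t ht, extSeq_castLE]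
  simp only [condFuturePayoff, condE, hsum, sum_sub_distrib, sum_const, card_univ,
    Fintype.card_fun, Fintype.card_bool, Fintype.card_fin, nsmul_eq_mul]
  push_cast
  field_simp

lemma coverPayoff_eq (b : Fin T → Bool) :
    coverPayoff T f b = f b - (∑ s, f s) / 2 ^ T := by
  simpa [coverPayoff, condMean_zero] using sum_payoff_from f 0 (Nat.zero_le T) b

end CoverStrategy

theorem stmt_13_general (T : ℕ) (f : (Fin T → Bool) → ℝ) :
    (∀ (t : ℕ) (ht : t < T) (p : Fin t → Bool),
        condFuturePayoff T f t ht p true - condE T f t ht p true =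
          condFuturePayoff T f t ht p false - condE T f t ht p false) ∧
    (∀ b : Fin T → Bool,
        f b - (∑ s : Fin T → Bool, f s) / 2 ^ T ≤ coverPayoff T f b) := by
  refine ⟨fun t ht p => ?_, fun b => (coverPayoff_eq f b).ge⟩
  simp only [condFuturePayoff_eq]
  ring

theorem stmt_13 (T : ℕ) (hT : 0 < T) (f : (Fin T → Bool) → ℝ) :
    (∀ (t : ℕ) (ht : t < T) (p : Fin t → Bool),
        condFuturePayoff T f t ht p true - condE T f t ht p true =
          condFuturePayoff T f t ht p false - condE T f t ht p false) ∧
    (∀ b : Fin T → Bool,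
        f b - (∑ s : Fin T → Bool, f s) / 2 ^ T ≤ coverPayoff T f b) :=
  stmt_13_general T f
end

section
/- Impossibility of per-interval regret: Suppose an algorithm A guarantees, on every sequence of ±1 bits, regret at most c√x on every contiguous interval of length x (i.e., its payoff within the interval is at least the absolute height of the interval minus c√x). Then for x and k large enough (as functions of c), there exists a distribution over sequences of length kx on which the expected total payoff of A is at most −Ω(k√x), hence the expected total regret exceeds any fixed multiple of √(kx). -/
/-- Payoff of the online prediction algorithm `A` (which maps the history so far to a
bet in `[-1,1]`) within the positions `[i, i+x)` of the sequence `b`. -/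
def intervalPay (A : List Bool → ℝ) {N : ℕ} (b : Fin N → Bool) (i x : ℕ) : ℝ :=
  ∑ t : Fin N, if i ≤ (t : ℕ) ∧ (t : ℕ) < i + x then
    pmOne (b t) * A ((List.ofFn b).take (t : ℕ)) else 0

/-- Height (sum of `±1` bits) of the sequence `b` within the positions `[i, i+x)`. -/
def intervalHeight {N : ℕ} (b : Fin N → Bool) (i x : ℕ) : ℝ :=
  ∑ t : Fin N, if i ≤ (t : ℕ) ∧ (t : ℕ) < i + x then pmOne (b t) else 0

lemma pmOne_not (v : Bool) : pmOne (!v) = -pmOne v := by cases v <;> simp [pmOne]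

lemma take_ofFn_congr {N : ℕ} (b b' : Fin N → Bool) (m : ℕ)
    (h : ∀ t : Fin N, (t : ℕ) < m → b t = b' t) :
    (List.ofFn b).take m = (List.ofFn b').take m := by
  apply List.ext_getElem
  · simp
  · intro i h1 h2
    have hi : i < m := by simp only [List.length_take, List.length_ofFn] at h1; omega
    simp only [List.getElem_take, List.getElem_ofFn]
    exact h _ hi

lemma intervalHeight_congr {N : ℕ} {b b' : Fin N → Bool} {i x : ℕ}
    (h : ∀ t : Fin N, i ≤ (t : ℕ) → (t : ℕ) < i + x → b t = b' t) :
    intervalHeight b i x = intervalHeight b' i x := by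
  unfold intervalHeight
  apply Finset.sum_congr rfl
  intro t _
  by_cases ht : i ≤ (t : ℕ) ∧ (t : ℕ) < i + x
  · rw [if_pos ht, if_pos ht, h t ht.1 ht.2]
  · rw [if_neg ht, if_neg ht]

lemma sum_fin_window {N : ℕ} (f : ℕ → ℝ) (i x : ℕ) (hix : i + x ≤ N) :
    (∑ t : Fin N, if i ≤ (t : ℕ) ∧ (t : ℕ) < i + x then f (t : ℕ) else 0)
      = ∑ r ∈ Finset.range x, f (i + r) := by
  rw [Fin.sum_univ_eq_sum_range (fun n => if i ≤ n ∧ n < i + x then f n else 0) N]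
  have h1 : ∀ n ∈ Finset.range N,
      (if i ≤ n ∧ n < i + x then f n else 0) = if n ∈ Finset.Ico i (i + x) then f n else 0 := by
    intro n _; simp [Finset.mem_Ico]
  rw [Finset.sum_congr rfl h1, Finset.sum_ite_mem]
  have h2 : Finset.range N ∩ Finset.Ico i (i + x) = Finset.Ico i (i + x) := by
    apply Finset.inter_eq_right.mpr
    intro n hn; simp only [Finset.mem_Ico] at hn; simp only [Finset.mem_range]; omega
  rw [h2, Finset.sum_Ico_eq_sum_range]
  simp

lemma height_via_range {N : ℕ} (b : Fin N → Bool) (i x : ℕ) (hix : i + x ≤ N) :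
    intervalHeight b i x = ∑ r ∈ Finset.range x,
      (if h : i + r < N then pmOne (b ⟨i + r, h⟩) else 0) := by
  unfold intervalHeight
  rw [← sum_fin_window (fun n => if h : n < N then pmOne (b ⟨n, h⟩) else 0) i x hix]
  apply Finset.sum_congr rfl
  intro t _
  by_cases hc : i ≤ (t : ℕ) ∧ (t : ℕ) < i + x
  · rw [if_pos hc, if_pos hc, dif_pos t.isLt]
  · rw [if_neg hc, if_neg hc]

lemma alt_sum_zero (i : ℕ) : ∀ m : ℕ,
    ∑ r ∈ Finset.range (2 * m), pmOne (decide ((i + r) % 2 = 0)) = 0 := by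
  intro m
  induction m with
  | zero => simp
  | succ m ih =>
    have h2 : 2 * (m + 1) = (2 * m) + 1 + 1 := by ring
    rw [h2, Finset.sum_range_succ, Finset.sum_range_succ, ih]
    rcases Nat.mod_two_eq_zero_or_one (i + 2 * m) with h | h
    · have h' : (i + (2 * m + 1)) % 2 = 1 := by omega
      have h'' : (i + 2 * m) % 2 = 0 := h
      simp [h', h'', pmOne]
    · have h' : (i + (2 * m + 1)) % 2 = 0 := by omega
      simp [h, h', pmOne]

lemma sum_range_window (k x : ℕ) (hx : 0 < x) (n : ℕ) (hn : n < k * x) (a : ℝ) :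
    ∑ j ∈ Finset.range k, (if j * x ≤ n ∧ n < j * x + x then a else 0) = a := by
  have hcond : (n / x) * x ≤ n ∧ n < (n / x) * x + x := by
    constructor
    · exact Nat.div_mul_le_self n x
    · have h1 : n % x < x := Nat.mod_lt _ hx
      have h2 : x * (n / x) + n % x = n := Nat.div_add_mod n x
      have : n / x * x = x * (n / x) := Nat.mul_comm _ _
      omega
  have hmem : n / x ∈ Finset.range k := by
    simp only [Finset.mem_range]
    exact (Nat.div_lt_iff_lt_mul hx).mpr (by omega)
  rw [Finset.sum_eq_single_of_mem (n / x) hmem ?uniq, if_pos hcond]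
  case uniq =>
    intro j _ hne
    rw [if_neg]
    rintro ⟨hl, hr⟩
    apply hne
    have : n / x = j := Nat.div_eq_of_lt_le hl (by rw [Nat.succ_mul]; omega)
    omega

lemma window_disjoint {j j' x n : ℕ} (hx : 0 < x) (h1 : j * x ≤ n) (h2 : n < j * x + x)
    (h1' : j' * x ≤ n) (h2' : n < j' * x + x) : j = j' := by
  have a1 : j * x < (j' + 1) * x := by rw [Nat.succ_mul]; omega
  have a2 : j' * x < (j + 1) * x := by rw [Nat.succ_mul]; omega
  have b1 : j < j' + 1 := Nat.lt_of_mul_lt_mul_right a1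
  have b2 : j' < j + 1 := Nat.lt_of_mul_lt_mul_right a2
  omega

lemma pay_decomp (A : List Bool → ℝ) (k x : ℕ) (hx : 0 < x) (b : Fin (k * x) → Bool) :
    intervalPay A b 0 (k * x) = ∑ j ∈ Finset.range k, intervalPay A b (j * x) x := by
  unfold intervalPay
  rw [Finset.sum_comm]
  apply Finset.sum_congr rfl
  intro t _
  have h1 : 0 ≤ (t : ℕ) ∧ (t : ℕ) < 0 + k * x := ⟨Nat.zero_le _, by simpa using t.isLt⟩
  rw [if_pos h1]
  exact (sum_range_window k x hx t t.isLt _).symm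

lemma sum_invol_zero {α : Type*} [DecidableEq α] (T : Finset α) (F : α → ℝ)
    (σ : α → α) (hinv : Function.Involutive σ)
    (hmem : ∀ a, a ∈ T ↔ σ a ∈ T) (hneg : ∀ a ∈ T, F (σ a) = -F a) :
    ∑ a ∈ T, F a = 0 := by
  have h1 : ∑ a ∈ T, F (σ a) = ∑ a ∈ T, F a :=
    Finset.sum_equiv hinv.toPerm hmem (fun i _ => rfl)
  have h2 : ∑ a ∈ T, F (σ a) = -∑ a ∈ T, F a := by
    rw [← Finset.sum_neg_distrib]
    exact Finset.sum_congr rfl hneg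
  linarith

lemma sum_pay_block_zero (A : List Bool → ℝ) {N : ℕ} (i x : ℕ)
    (T : Finset (Fin N → Bool))
    (hT : ∀ (b : Fin N → Bool) (t : Fin N), i ≤ (t : ℕ) → (t : ℕ) < i + x →
      (b ∈ T ↔ Function.update b t (! b t) ∈ T)) :
    ∑ b ∈ T, intervalPay A b i x = 0 := by
  classical
  unfold intervalPay
  rw [Finset.sum_comm]
  apply Finset.sum_eq_zero
  intro t _
  by_cases hc : i ≤ (t : ℕ) ∧ (t : ℕ) < i + x
  · simp only [if_pos hc]
    apply sum_invol_zero T _ (fun b => Function.update b t (! b t))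
    · intro b
      funext u
      rcases eq_or_ne u t with rfl | hu
      · simp
      · simp [Function.update_of_ne hu]
    · intro b
      exact hT b t hc.1 hc.2
    · intro b _
      have h1 : Function.update b t (! b t) t = ! b t := Function.update_self _ _ _
      have h2 : (List.ofFn (Function.update b t (! b t))).take (t : ℕ)
          = (List.ofFn b).take (t : ℕ) := by
        apply take_ofFn_congr
        intro u hu
        have hut : u ≠ t := by
          intro h
          rw [h] at hu
          omega
        exact Function.update_of_ne hut _ _
      rw [h1, h2, pmOne_not]
      ring
  · simp only [if_neg hc]
    exact Finset.sum_const_zero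
/-- No algorithm can guarantee regret `c√x` on every interval of every sequence:
any such algorithm has expected payoff `-Ω(k√x)` on some distribution of sequences
of length `k·x`, so its expected total regret exceeds any fixed multiple of `√(kx)`. -/
theorem stmt_14 (c : ℝ) (hc : 0 < c) (A : List Bool → ℝ) (hA : ∀ l, |A l| ≤ 1)
    (hreg : ∀ (N : ℕ) (b : Fin N → Bool) (i x : ℕ), i + x ≤ N →
      |intervalHeight b i x| - c * Real.sqrt x ≤ intervalPay A b i x) :
    ∃ δ : ℝ, 0 < δ ∧ ∀ C : ℝ, ∃ x k : ℕ, 0 < x ∧ 0 < k ∧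
      ∃ w : (Fin (k * x) → Bool) → ℝ,
        (∀ b, 0 ≤ w b) ∧ (∑ b, w b = 1) ∧
        (∑ b, w b * intervalPay A b 0 (k * x) ≤ -δ * k * Real.sqrt x) ∧
        (C * Real.sqrt (k * x) ≤
          ∑ b, w b * (|intervalHeight b 0 (k * x)| - intervalPay A b 0 (k * x))) := by
  classical
  -- choose the block length x (even, with √x ≥ 2c)
  set m : ℕ := ⌈(4 : ℝ) * c ^ 2⌉₊ + 1 with hm
  set x : ℕ := 2 * m with hxdef
  have hx0 : 0 < x := by omega
  have hxR0 : (0 : ℝ) < (x : ℝ) := by exact_mod_cast hx0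
  have hxc : (4 : ℝ) * c ^ 2 ≤ (x : ℝ) := by
    have h1 := Nat.le_ceil ((4 : ℝ) * c ^ 2)
    have h2 : (⌈(4 : ℝ) * c ^ 2⌉₊ : ℝ) ≤ (x : ℝ) := by
      have : ⌈(4 : ℝ) * c ^ 2⌉₊ ≤ x := by omega
      exact_mod_cast this
    linarith
  have hsx0 : 0 < Real.sqrt x := Real.sqrt_pos.mpr hxR0
  have hsq : 2 * c ≤ Real.sqrt x := by
    have h1 : Real.sqrt ((2 * c) ^ 2) ≤ Real.sqrt x := by
      apply Real.sqrt_le_sqrt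
      nlinarith
    rwa [Real.sqrt_sq (by positivity)] at h1
  have hθx : 2 * c * Real.sqrt x ≤ (x : ℝ) := by
    calc 2 * c * Real.sqrt x ≤ Real.sqrt x * Real.sqrt x :=
          mul_le_mul_of_nonneg_right hsq hsx0.le
      _ = (x : ℝ) := Real.mul_self_sqrt hxR0.le
  set δ : ℝ := c / 2 ^ x with hδ
  have hδ0 : 0 < δ := by positivity
  refine ⟨δ, hδ0, ?_⟩
  intro C
  set k : ℕ := ⌈(C / δ) ^ 2⌉₊ + 1 with hk
  have hk0 : 0 < k := Nat.succ_pos _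
  refine ⟨x, k, hx0, hk0, ?_⟩
  have hkR0 : (0 : ℝ) < (k : ℝ) := by exact_mod_cast hk0
  -- window inclusion
  have hwin : ∀ j, j < k → j * x + x ≤ k * x := by
    intro j hj
    have : (j + 1) * x ≤ k * x := Nat.mul_le_mul_right x hj
    rw [Nat.succ_mul] at this
    exact this
  set θ : ℝ := 2 * c * Real.sqrt x with hθ
  have hθ0 : 0 < θ := by positivity
  -- the good set
  set good : (Fin (k * x) → Bool) → Prop :=
    fun b => ∀ j, j < k → |intervalHeight b (j * x) x| < θ with hgood
  set S : Finset (Fin (k * x) → Bool) := Finset.univ.filter good with hS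
  -- the alternating sequence is good
  have halt : (fun t : Fin (k * x) => decide ((t : ℕ) % 2 = 0)) ∈ S := by
    rw [hS, Finset.mem_filter]
    refine ⟨Finset.mem_univ _, ?_⟩
    intro j hj
    have hix := hwin j hj
    rw [height_via_range _ _ _ hix]
    have hcongr : ∀ r ∈ Finset.range x,
        (if h : j * x + r < k * x then
          pmOne ((fun t : Fin (k * x) => decide ((t : ℕ) % 2 = 0)) ⟨j * x + r, h⟩) else 0)
        = pmOne (decide ((j * x + r) % 2 = 0)) := by
      intro r hr
      rw [Finset.mem_range] at hr
      rw [dif_pos (by omega)]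
    rw [Finset.sum_congr rfl hcongr, hxdef, alt_sum_zero (j * x) m]
    simpa using hθ0
  have hZ1 : 0 < S.card := Finset.card_pos.mpr ⟨_, halt⟩
  set Z : ℝ := (S.card : ℝ) with hZ
  have hZ0 : 0 < Z := by rw [hZ]; exact_mod_cast hZ1
  set w : (Fin (k * x) → Bool) → ℝ := fun b => if b ∈ S then Z⁻¹ else 0 with hw
  -- generic reduction of weighted sums to sums over S
  have hsum_ite : ∀ F : (Fin (k * x) → Bool) → ℝ,
      (∑ b, w b * F b) = Z⁻¹ * ∑ b ∈ S, F b := by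
    intro F
    have h1 : ∀ b, w b * F b = if b ∈ S then Z⁻¹ * F b else 0 := by
      intro b; by_cases hb : b ∈ S <;> simp [hw, hb]
    rw [Finset.sum_congr rfl (fun b _ => h1 b), Finset.sum_ite_mem, Finset.univ_inter,
      Finset.mul_sum]
  -- the key per-block estimate
  have key : ∀ j, j < k →
      ∑ b ∈ S, intervalPay A b (j * x) x ≤ -(c * Real.sqrt x / 2 ^ x) * Z := by
    intro j hj
    have hix := hwin j hj
    set GE : (Fin (k * x) → Bool) → Prop :=
      fun b => ∀ j', j' < k → j' ≠ j → |intervalHeight b (j' * x) x| < θ with hGE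
    set T : Finset (Fin (k * x) → Bool) := Finset.univ.filter GE with hT
    set Bset : Finset (Fin (k * x) → Bool) :=
      Finset.univ.filter (fun b => GE b ∧ θ ≤ |intervalHeight b (j * x) x|) with hBset
    -- the sum of the block payoff over T vanishes
    have hT0 : ∑ b ∈ T, intervalPay A b (j * x) x = 0 := by
      apply sum_pay_block_zero
      intro b t ht1 ht2
      have hup : ∀ j', j' < k → j' ≠ j →
          intervalHeight (Function.update b t (! b t)) (j' * x) x
            = intervalHeight b (j' * x) x := by
        intro j' hj' hne
        apply intervalHeight_congr
        intro u hu1 hu2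
        have hut : u ≠ t := by
          intro h
          rw [h] at hu1 hu2
          exact hne (window_disjoint hx0 hu1 hu2 ht1 ht2)
        exact Function.update_of_ne hut _ _
      simp only [hT, Finset.mem_filter, Finset.mem_univ, true_and]
      constructor
      · intro hb j' h1 h2
        rw [hup j' h1 h2]
        exact hb j' h1 h2
      · intro hb j' h1 h2
        rw [← hup j' h1 h2]
        exact hb j' h1 h2
    -- splitting T according to the height of block j
    have hTS : T.filter (fun b => |intervalHeight b (j * x) x| < θ) = S := by
      rw [hT, hS, Finset.filter_filter]
      apply Finset.filter_congr
      intro b _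
      constructor
      · rintro ⟨h1, h2⟩ j' hj'
        by_cases hcase : j' = j
        · rw [hcase]; exact h2
        · exact h1 j' hj' hcase
      · intro hb
        exact ⟨fun j' h1 _ => hb j' h1, hb j hj⟩
    have hTB : T.filter (fun b => ¬ |intervalHeight b (j * x) x| < θ) = Bset := by
      rw [hT, hBset, Finset.filter_filter]
      apply Finset.filter_congr
      intro b _
      simp [not_lt, and_comm]
    have hsplit : (∑ b ∈ S, intervalPay A b (j * x) x)
        + (∑ b ∈ Bset, intervalPay A b (j * x) x) = 0 := by
      rw [← hTS, ← hTB, Finset.sum_filter_add_sum_filter_not, hT0]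
    -- payoff lower bound on Bset
    have hpayB : ∀ b ∈ Bset, c * Real.sqrt x ≤ intervalPay A b (j * x) x := by
      intro b hb
      have h1 := hreg (k * x) b (j * x) x hix
      have h2 : θ ≤ |intervalHeight b (j * x) x| :=
        ((Finset.mem_filter.mp hb).2).2
      rw [hθ] at h2
      linarith
    have hsumB : (Bset.card : ℝ) * (c * Real.sqrt x)
        ≤ ∑ b ∈ Bset, intervalPay A b (j * x) x := by
      have h1 := Finset.card_nsmul_le_sum Bset _ (c * Real.sqrt x) hpayB
      simpa [nsmul_eq_mul] using h1
    -- cardinality comparison: S.card ≤ 2^x * Bset.card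
    set φ : (Fin (k * x) → Bool) → (Fin (k * x) → Bool) :=
      fun b u => if j * x ≤ (u : ℕ) ∧ (u : ℕ) < j * x + x then true else b u with hφ
    have hφmem : ∀ b ∈ S, φ b ∈ Bset := by
      intro b hb
      have hgoodb : good b := (Finset.mem_filter.mp hb).2
      rw [hBset, Finset.mem_filter]
      refine ⟨Finset.mem_univ _, ?_, ?_⟩
      · intro j' h1 h2
        have heq : intervalHeight (φ b) (j' * x) x = intervalHeight b (j' * x) x := by
          apply intervalHeight_congr
          intro u hu1 hu2
          have hnot : ¬ (j * x ≤ (u : ℕ) ∧ (u : ℕ) < j * x + x) := by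
            rintro ⟨a1, a2⟩
            exact h2 (window_disjoint hx0 hu1 hu2 a1 a2)
          simp only [hφ, if_neg hnot]
        rw [heq]
        exact hgoodb j' h1
      · have hval : intervalHeight (φ b) (j * x) x = (x : ℝ) := by
          rw [height_via_range _ _ _ hix]
          have hterm : ∀ r ∈ Finset.range x,
              (if h : j * x + r < k * x then pmOne (φ b ⟨j * x + r, h⟩) else 0) = 1 := by
            intro r hr
            rw [Finset.mem_range] at hr
            rw [dif_pos (by omega)]
            have hcnd : j * x ≤ ((⟨j * x + r, by omega⟩ : Fin (k * x)) : ℕ)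
                ∧ ((⟨j * x + r, by omega⟩ : Fin (k * x)) : ℕ) < j * x + x := by
              simp; omega
            have : φ b ⟨j * x + r, by omega⟩ = true := by
              simp only [hφ, if_pos hcnd]
            rw [this]
            rfl
          rw [Finset.sum_congr rfl hterm, Finset.sum_const, Finset.card_range]
          simp
        rw [hval, abs_of_nonneg hxR0.le, hθ]
        exact hθx
    have hfiber : ∀ a ∈ S.image φ, (S.filter (fun b => φ b = a)).card ≤ 2 ^ x := by
      intro a _
      have hcard : (S.filter (fun b => φ b = a)).card
          ≤ (Finset.univ : Finset (Fin x → Bool)).card := by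
        apply Finset.card_le_card_of_injOn
          (fun b => fun r : Fin x => b ⟨j * x + (r : ℕ), by
            have := r.isLt; omega⟩)
        · intro b _
          exact Finset.mem_univ _
        · intro b hb b' hb' heq
          simp only [Finset.coe_filter, Set.mem_setOf_eq] at hb hb'
          funext u
          by_cases hu : j * x ≤ (u : ℕ) ∧ (u : ℕ) < j * x + x
          · have h1 := congrFun heq ⟨(u : ℕ) - j * x, by omega⟩
            simp only at h1
            have h2 : (⟨j * x + ((u : ℕ) - j * x), by omega⟩ : Fin (k * x)) = u :=
              Fin.ext (by simp; omega)
            rwa [h2] at h1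
          · have h1 : φ b u = φ b' u := by rw [hb.2, hb'.2]
            simp only [hφ] at h1
            rw [if_neg hu, if_neg hu] at h1
            exact h1
      calc (S.filter (fun b => φ b = a)).card
          ≤ (Finset.univ : Finset (Fin x → Bool)).card := hcard
        _ = 2 ^ x := by simp [Finset.card_univ, Fintype.card_fun]
    have hcardS : S.card ≤ 2 ^ x * Bset.card := by
      have h1 : S.card ≤ 2 ^ x * (S.image φ).card :=
        Finset.card_le_mul_card_image S (2 ^ x) hfiber
      have h2 : (S.image φ).card ≤ Bset.card :=
        Finset.card_le_card (Finset.image_subset_iff.mpr hφmem)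
      calc S.card ≤ 2 ^ x * (S.image φ).card := h1
        _ ≤ 2 ^ x * Bset.card := Nat.mul_le_mul_left _ h2
    -- put the pieces together
    have hcR : Z ≤ (2 : ℝ) ^ x * (Bset.card : ℝ) := by
      rw [hZ]
      exact_mod_cast hcardS
    have h2x : (0 : ℝ) < 2 ^ x := by positivity
    have hcs : (0 : ℝ) ≤ c * Real.sqrt x := by positivity
    have hBc : (0 : ℝ) ≤ (Bset.card : ℝ) := Nat.cast_nonneg _
    have hfinal : (c * Real.sqrt x / 2 ^ x) * Z ≤ (Bset.card : ℝ) * (c * Real.sqrt x) := by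
      rw [div_mul_eq_mul_div, div_le_iff₀ h2x]
      nlinarith [mul_le_mul_of_nonneg_left hcR hcs]
    linarith
  -- assemble the expected-payoff bound
  have h3 : (∑ b, w b * intervalPay A b 0 (k * x)) ≤ -δ * k * Real.sqrt x := by
    rw [hsum_ite]
    have e1 : ∑ b ∈ S, intervalPay A b 0 (k * x)
        = ∑ j ∈ Finset.range k, ∑ b ∈ S, intervalPay A b (j * x) x := by
      rw [← Finset.sum_comm]
      exact Finset.sum_congr rfl (fun b _ => pay_decomp A k x hx0 b)
    have e2 : ∑ j ∈ Finset.range k, ∑ b ∈ S, intervalPay A b (j * x) x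
        ≤ ∑ j ∈ Finset.range k, (-(c * Real.sqrt x / 2 ^ x) * Z) := by
      apply Finset.sum_le_sum
      intro j hj
      exact key j (Finset.mem_range.mp hj)
    have e3 : ∑ j ∈ Finset.range k, (-(c * Real.sqrt x / 2 ^ x) * Z)
        = (k : ℝ) * (-(c * Real.sqrt x / 2 ^ x) * Z) := by
      rw [Finset.sum_const, Finset.card_range, nsmul_eq_mul]
    have e4 : Z⁻¹ * ((k : ℝ) * (-(c * Real.sqrt x / 2 ^ x) * Z)) = -δ * k * Real.sqrt x := by
      have e5 : Z⁻¹ * ((k : ℝ) * (-(c * Real.sqrt x / 2 ^ x) * Z))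
          = (Z⁻¹ * Z) * ((k : ℝ) * (-(c * Real.sqrt x / 2 ^ x))) := by ring
      rw [hδ, e5, inv_mul_cancel₀ hZ0.ne']
      ring
    calc Z⁻¹ * ∑ b ∈ S, intervalPay A b 0 (k * x)
        = Z⁻¹ * ∑ j ∈ Finset.range k, ∑ b ∈ S, intervalPay A b (j * x) x := by rw [e1]
      _ ≤ Z⁻¹ * ((k : ℝ) * (-(c * Real.sqrt x / 2 ^ x) * Z)) := by
          apply mul_le_mul_of_nonneg_left _ (inv_nonneg.mpr hZ0.le)
          rw [← e3]
          exact e2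
      _ = -δ * k * Real.sqrt x := e4
  have hwb : ∀ b, w b = if b ∈ S then Z⁻¹ else 0 := fun _ => rfl
  refine ⟨w, ?_, ?_, h3, ?_⟩
  · intro b
    rw [hwb b]
    split
    · exact inv_nonneg.mpr hZ0.le
    · exact le_rfl
  · have h1 : ∀ b : Fin (k * x) → Bool, w b = if b ∈ S then Z⁻¹ else 0 := fun b => rfl
    rw [Finset.sum_congr rfl (fun b _ => h1 b), Finset.sum_ite_mem, Finset.univ_inter,
      Finset.sum_const, nsmul_eq_mul]
    exact mul_inv_cancel₀ hZ0.ne'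
  · -- expected regret bound
    have hsplit4 : (∑ b, w b * (|intervalHeight b 0 (k * x)| - intervalPay A b 0 (k * x)))
        = (∑ b, w b * |intervalHeight b 0 (k * x)|)
          - (∑ b, w b * intervalPay A b 0 (k * x)) := by
      rw [← Finset.sum_sub_distrib]
      apply Finset.sum_congr rfl
      intro b _
      ring
    have hnn : 0 ≤ ∑ b, w b * |intervalHeight b 0 (k * x)| := by
      apply Finset.sum_nonneg
      intro b _
      apply mul_nonneg _ (abs_nonneg _)
      rw [hwb b]; split
      · exact inv_nonneg.mpr hZ0.le
      · exact le_rfl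
    have hge : δ * k * Real.sqrt x
        ≤ ∑ b, w b * (|intervalHeight b 0 (k * x)| - intervalPay A b 0 (k * x)) := by
      rw [hsplit4]
      have := h3
      linarith
    have hCk : C * Real.sqrt (k * x) ≤ δ * k * Real.sqrt x := by
      rw [show ((k : ℝ) * (x : ℝ)) = ((k : ℝ)) * (x : ℝ) from rfl,
        Real.sqrt_mul (Nat.cast_nonneg k)]
      have hδkx : 0 ≤ δ * k * Real.sqrt x := by positivity
      rcases le_or_gt C 0 with hC | hC
      · have : C * (Real.sqrt k * Real.sqrt x) ≤ 0 :=
          mul_nonpos_of_nonpos_of_nonneg hC (by positivity)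
        linarith
      · have hkge : (C / δ) ^ 2 ≤ (k : ℝ) := by
          have h1 := Nat.le_ceil ((C / δ) ^ 2)
          have h2 : ((⌈(C / δ) ^ 2⌉₊ : ℕ) : ℝ) ≤ (k : ℝ) := by
            have : ⌈(C / δ) ^ 2⌉₊ ≤ k := by omega
            exact_mod_cast this
          linarith
        have hsk : C / δ ≤ Real.sqrt k := by
          have h1 : Real.sqrt ((C / δ) ^ 2) ≤ Real.sqrt k := Real.sqrt_le_sqrt hkge
          rwa [Real.sqrt_sq (le_of_lt (div_pos hC hδ0))] at h1
        have hCk2 : C ≤ δ * Real.sqrt k := by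
          rw [div_le_iff₀ hδ0] at hsk
          linarith
        have hkk : Real.sqrt (k : ℝ) * Real.sqrt (k : ℝ) = (k : ℝ) :=
          Real.mul_self_sqrt (Nat.cast_nonneg k)
        calc C * (Real.sqrt k * Real.sqrt x)
            ≤ (δ * Real.sqrt k) * (Real.sqrt k * Real.sqrt x) := by
              apply mul_le_mul_of_nonneg_right hCk2
              positivity
          _ = δ * (Real.sqrt (k : ℝ) * Real.sqrt (k : ℝ)) * Real.sqrt x := by ring
          _ = δ * k * Real.sqrt x := by rw [hkk]
    exact le_trans hCk hge
end

section
/- If E_S[P^A_α(S)] ≤ 0 for uniform S ∈ {−1,1}^T (T a power of 2), then E_S[P_{cα}(S)] ≤ 0, where c = √2/(√2−1), P_α is the interval payoff maximizing Σ_i(|h(X_i)| − α√|X_i|) over all partitions, and P^A_α restricts to partitions into aligned dyadic intervals. -/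
/-- Extension of a finite sequence by zeros. -/
def seqExt {T : ℕ} (s : Fin T → ℝ) (t : ℕ) : ℝ := if h : t < T then s ⟨t, h⟩ else 0

/-- `c : Fin (k+1) → ℕ` is the list of cut points of a partition of `[0, T)` into
`k` contiguous nonempty intervals. -/
def IsCutSeq (T k : ℕ) (c : Fin (k + 1) → ℕ) : Prop :=
  StrictMono c ∧ c 0 = 0 ∧ c (Fin.last k) = T

/-- Value `Σ_i (|h(X_i)| - α √|X_i|)` of a partition given by cuts `c`. -/
noncomputable def cutValue (T k : ℕ) (α : ℝ) (s : Fin T → ℝ) (c : Fin (k + 1) → ℕ) : ℝ :=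
  ∑ i : Fin k,
    (|∑ t ∈ Finset.Ico (c i.castSucc) (c i.succ), seqExt s t| -
      α * Real.sqrt ((c i.succ : ℝ) - (c i.castSucc : ℝ)))

/-- Interval payoff function `P_α`: maximum over all partitions. -/
noncomputable def P (T : ℕ) (α : ℝ) (s : Fin T → ℝ) : ℝ :=
  sSup {v : ℝ | ∃ (k : ℕ) (c : Fin (k + 1) → ℕ), IsCutSeq T k c ∧ v = cutValue T k α s c}

/-- Aligned interval payoff function `P^A_α`: maximum over partitions into aligned
dyadic intervals `(j·2^i, (j+1)·2^i]`. -/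
noncomputable def PA (T : ℕ) (α : ℝ) (s : Fin T → ℝ) : ℝ :=
  sSup {v : ℝ | ∃ (k : ℕ) (c : Fin (k + 1) → ℕ), IsCutSeq T k c ∧
    (∀ i : Fin k, ∃ e j : ℕ, c i.castSucc = j * 2 ^ e ∧ c i.succ = (j + 1) * 2 ^ e) ∧
    v = cutValue T k α s c}


/-!
Refine every interval `X` of an optimal partition into aligned dyadic intervals `Y`. By the
triangle inequality `|h(X)| ≤ ∑ |h(Y)|`, so it suffices that `∑ √|Y| ≤ c √|X|`; then
`P_{cα} ≤ P^A_α` holds pointwise and the expectations compare.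

For the bound, split `X = [a, b)` at the point `M` divisible by the largest power `2^e` of two
met by `X`; both sides have length at most `2^e`. Each side is tiled greedily by strictly
decreasing powers of two, starting from `M`, and the square roots of those lengths sum to at most
`g(ℓ) = (√(ℓ+1) - 1)/(√2 - 1)`. Finally `g(ℓ₁) + g(ℓ₂) ≤ c √(ℓ₁ + ℓ₂)`, which is where
`c = √2/(√2 - 1)` comes from.
-/

namespace IntervalPayoff

open Finset Real

noncomputable def dyadicConst : ℝ := √2 / (√2 - 1)

noncomputable def oneSidedBound (x : ℝ) : ℝ := (√(x + 1) - 1) / (√2 - 1)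

lemma sqrt_two_sub_one_pos : 0 < √2 - 1 := sub_pos.mpr one_lt_sqrt_two

lemma oneSidedBound_zero : oneSidedBound 0 = 0 := by
  simp [oneSidedBound]

lemma sqrt_add_oneSidedBound_le {u h : ℝ} (hu : 0 ≤ u) (huh : u + 1 ≤ h) :
    √h + oneSidedBound u ≤ oneSidedBound (u + h) := by
  have key : (√2 - 1) * √h + √(u + 1) ≤ √(u + h + 1) := by
    have hs : √2 ^ 2 = 2 := sq_sqrt zero_le_two
    have hh : √h ^ 2 = h := sq_sqrt (by linarith)
    have hv : √(u + 1) ^ 2 = u + 1 := sq_sqrt (by linarith)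
    have hvh : √(u + 1) ≤ √h := sqrt_le_sqrt huh
    have hnn : 0 ≤ (√2 - 1) * √h + √(u + 1) := by
      have := sqrt_two_sub_one_pos
      positivity
    rw [le_sqrt hnn (by linarith)]
    nlinarith [mul_le_mul_of_nonneg_left hvh (sqrt_nonneg h), one_lt_sqrt_two]
  rw [oneSidedBound, oneSidedBound, le_div_iff₀ sqrt_two_sub_one_pos, add_mul,
    div_mul_cancel₀ _ sqrt_two_sub_one_pos.ne']
  linarith

lemma oneSidedBound_add_le {x y : ℝ} (hx : 0 ≤ x) (hy : 0 ≤ y) :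
    oneSidedBound x + oneSidedBound y ≤ dyadicConst * √(x + y) := by
  have hs : √2 ^ 2 = 2 := sq_sqrt zero_le_two
  have hqm : √(x + 1) + √(y + 1) ≤ √2 * √(x + y + 2) := by
    rw [← sqrt_mul zero_le_two, le_sqrt (by positivity) (by positivity)]
    nlinarith [sq_nonneg (√(x + 1) - √(y + 1)), sq_sqrt (by linarith : 0 ≤ x + 1),
      sq_sqrt (by linarith : 0 ≤ y + 1)]
  have hsub : √(x + y + 2) ≤ √(x + y) + √2 := by
    rw [sqrt_le_left (by positivity)]
    nlinarith [mul_nonneg (sqrt_nonneg (x + y)) (sqrt_nonneg 2), sq_sqrt (by linarith : 0 ≤ x + y)]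
  rw [oneSidedBound, oneSidedBound, dyadicConst, div_mul_eq_mul_div, ← add_div,
    div_le_div_iff_of_pos_right sqrt_two_sub_one_pos]
  nlinarith [sqrt_nonneg 2]

/-- The intervals `[p.1, p.2)`, `p ∈ L`, are nonempty and tile `[a, b)` from left to right. -/
def IsTiling : ℕ → ℕ → List (ℕ × ℕ) → Prop
  | a, b, [] => a = b
  | a, b, p :: L => p.1 = a ∧ a < p.2 ∧ IsTiling p.2 b L

/-- `[p.1, p.2)` is the paper's aligned interval `(j 2^e, (j+1) 2^e]`, shifted by one. -/
def IsAligned (p : ℕ × ℕ) : Prop := ∃ e j : ℕ, p.1 = j * 2 ^ e ∧ p.2 = (j + 1) * 2 ^ e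

noncomputable def sqrtLengthSum (L : List (ℕ × ℕ)) : ℝ :=
  (L.map fun p => √((p.2 : ℝ) - p.1)).sum

noncomputable def intervalValue (α : ℝ) (f : ℕ → ℝ) (p : ℕ × ℕ) : ℝ :=
  |∑ t ∈ Ico p.1 p.2, f t| - α * √((p.2 : ℝ) - p.1)

noncomputable def tilingValue (α : ℝ) (f : ℕ → ℝ) (L : List (ℕ × ℕ)) : ℝ :=
  (L.map (intervalValue α f)).sum

lemma isTiling_singleton {a b : ℕ} (h : a < b) : IsTiling a b [(a, b)] := ⟨rfl, h, rfl⟩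

lemma isAligned_of_dvd {e x : ℕ} (h : 2 ^ e ∣ x) : IsAligned (x, x + 2 ^ e) := by
  obtain ⟨j, rfl⟩ := h
  exact ⟨e, j, mul_comm _ _, by ring⟩

namespace IsTiling

lemma le : ∀ {a b : ℕ} {L : List (ℕ × ℕ)}, IsTiling a b L → a ≤ b
  | _, _, [], h => le_of_eq h
  | _, _, _ :: _, h => h.2.1.le.trans (le h.2.2)

lemma append {a m b : ℕ} {L₁ L₂ : List (ℕ × ℕ)} (h₁ : IsTiling a m L₁) (h₂ : IsTiling m b L₂) :
    IsTiling a b (L₁ ++ L₂) := by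
  induction L₁ generalizing a with
  | nil => cases h₁; exact h₂
  | cons p L ih => exact ⟨h₁.1, h₁.2.1, ih h₁.2.2⟩

lemma sum_Ico_eq {a b : ℕ} {L : List (ℕ × ℕ)} (h : IsTiling a b L) (f : ℕ → ℝ) :
    ∑ t ∈ Ico a b, f t = (L.map fun p => ∑ t ∈ Ico p.1 p.2, f t).sum := by
  induction L generalizing a with
  | nil => cases h; simp
  | cons p L ih =>
    obtain ⟨rfl, hp, hL⟩ := h
    rw [List.map_cons, List.sum_cons, ← ih hL, sum_Ico_consecutive f hp.le hL.le]

lemma abs_sum_Ico_le {a b : ℕ} {L : List (ℕ × ℕ)} (h : IsTiling a b L) (f : ℕ → ℝ) :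
    |∑ t ∈ Ico a b, f t| ≤ (L.map fun p => |∑ t ∈ Ico p.1 p.2, f t|).sum := by
  induction L generalizing a with
  | nil => cases h; simp
  | cons p L ih =>
    obtain ⟨rfl, hp, hL⟩ := h
    rw [List.map_cons, List.sum_cons, ← sum_Ico_consecutive f hp.le hL.le]
    exact (abs_add_le _ _).trans (add_le_add_right (ih hL) _)

lemma tilingValue_le {α : ℝ} (hα : 0 ≤ α) (f : ℕ → ℝ) {a b : ℕ} {L : List (ℕ × ℕ)}
    (h : IsTiling a b L) : tilingValue α f L ≤ ∑ t ∈ Ico a b, |f t| := by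
  rw [tilingValue, h.sum_Ico_eq]
  refine List.sum_le_sum fun p _ => ?_
  rw [intervalValue]
  linarith [abs_sum_le_sum_abs f (Ico p.1 p.2), mul_nonneg hα (sqrt_nonneg ((p.2 : ℝ) - p.1))]

end IsTiling

lemma tilingValue_eq (α : ℝ) (f : ℕ → ℝ) (L : List (ℕ × ℕ)) :
    tilingValue α f L =
      (L.map fun p => |∑ t ∈ Ico p.1 p.2, f t|).sum - α * sqrtLengthSum L := by
  induction L with
  | nil => simp [tilingValue, sqrtLengthSum]
  | cons p L ih =>
    simp only [tilingValue, sqrtLengthSum, List.map_cons, List.sum_cons] at ih ⊢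
    rw [ih, intervalValue]
    ring

lemma tilingValue_append (α : ℝ) (f : ℕ → ℝ) (L₁ L₂ : List (ℕ × ℕ)) :
    tilingValue α f (L₁ ++ L₂) = tilingValue α f L₁ + tilingValue α f L₂ := by
  simp [tilingValue]

lemma sqrtLengthSum_append (L₁ L₂ : List (ℕ × ℕ)) :
    sqrtLengthSum (L₁ ++ L₂) = sqrtLengthSum L₁ + sqrtLengthSum L₂ := by
  simp [sqrtLengthSum]

lemma sqrtLengthSum_singleton (a l : ℕ) : sqrtLengthSum [(a, a + l)] = √(l : ℝ) := by
  simp [sqrtLengthSum]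

lemma sqrt_two_pow_add_oneSidedBound_le {e len : ℕ} (hle : 2 ^ e ≤ len)
    (hlt : len < 2 * 2 ^ e) :
    √(((2 ^ e : ℕ) : ℝ)) + oneSidedBound ((len - 2 ^ e : ℕ) : ℝ) ≤ oneSidedBound len := by
  have step := sqrt_add_oneSidedBound_le (Nat.cast_nonneg (len - 2 ^ e))
    (h := ((2 ^ e : ℕ) : ℝ)) (by exact_mod_cast (by omega))
  rwa [← Nat.cast_add, Nat.sub_add_cancel hle] at step

lemma two_pow_log_le_and_lt {len : ℕ} (hlen : len ≠ 0) :
    2 ^ Nat.log 2 len ≤ len ∧ len < 2 * 2 ^ Nat.log 2 len :=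
  ⟨Nat.pow_log_le_self 2 hlen,
    by simpa [pow_succ, mul_comm] using Nat.lt_pow_succ_log_self one_lt_two len⟩

/-- Greedy tiling, splitting off the largest power of two at the left end. -/
lemma exists_alignedTiling_of_dvd_left {n M len : ℕ} (hM : 2 ^ n ∣ M) (hlen : len ≤ 2 ^ n) :
    ∃ L, IsTiling M (M + len) L ∧ (∀ p ∈ L, IsAligned p) ∧
      sqrtLengthSum L ≤ oneSidedBound len := by
  induction len using Nat.strong_induction_on generalizing M n with
  | _ len ih =>
  rcases eq_or_ne len 0 with rfl | hlen0
  · exact ⟨[], rfl, by simp, by simp [sqrtLengthSum, oneSidedBound_zero]⟩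
  obtain ⟨hle, hlt⟩ := two_pow_log_le_and_lt hlen0
  set e := Nat.log 2 len
  have he : 2 ^ e ∣ M := ((Nat.pow_dvd_pow_iff_pow_le_pow two_pos).mpr (hle.trans hlen)).trans hM
  obtain ⟨L, hL, hLal, hLsum⟩ := ih (len - 2 ^ e) (by omega) (n := e) (M := M + 2 ^ e)
    (Nat.dvd_add he dvd_rfl) (by omega)
  refine ⟨[(M, M + 2 ^ e)] ++ L, ?_, ?_, ?_⟩
  · have hend : M + 2 ^ e + (len - 2 ^ e) = M + len := by omega
    exact (isTiling_singleton (Nat.lt_add_of_pos_right (Nat.two_pow_pos e))).append (hend ▸ hL)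
  · simpa [isAligned_of_dvd he] using hLal
  · rw [sqrtLengthSum_append, sqrtLengthSum_singleton]
    linarith [sqrt_two_pow_add_oneSidedBound_le hle hlt]

/-- Greedy tiling, splitting off the largest power of two at the right end. -/
lemma exists_alignedTiling_of_dvd_right {n M len : ℕ} (hM : 2 ^ n ∣ M + len)
    (hlen : len ≤ 2 ^ n) :
    ∃ L, IsTiling M (M + len) L ∧ (∀ p ∈ L, IsAligned p) ∧
      sqrtLengthSum L ≤ oneSidedBound len := by
  induction len using Nat.strong_induction_on generalizing n with
  | _ len ih =>
  rcases eq_or_ne len 0 with rfl | hlen0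
  · exact ⟨[], rfl, by simp, by simp [sqrtLengthSum, oneSidedBound_zero]⟩
  obtain ⟨hle, hlt⟩ := two_pow_log_le_and_lt hlen0
  set e := Nat.log 2 len
  have hend : M + (len - 2 ^ e) + 2 ^ e = M + len := by omega
  have he : 2 ^ e ∣ M + (len - 2 ^ e) := by
    have : 2 ^ e ∣ M + len :=
      ((Nat.pow_dvd_pow_iff_pow_le_pow two_pos).mpr (hle.trans hlen)).trans hM
    exact (Nat.dvd_add_left dvd_rfl).mp (hend ▸ this)
  obtain ⟨L, hL, hLal, hLsum⟩ := ih (len - 2 ^ e) (by omega) he (by omega)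
  refine ⟨L ++ [(M + (len - 2 ^ e), M + (len - 2 ^ e) + 2 ^ e)], ?_, ?_, ?_⟩
  · exact hend ▸ hL.append (isTiling_singleton (Nat.lt_add_of_pos_right (Nat.two_pow_pos e)))
  · intro p hp
    rcases List.mem_append.mp hp with hp | hp
    exacts [hLal p hp, List.mem_singleton.mp hp ▸ isAligned_of_dvd he]
  · rw [sqrtLengthSum_append, sqrtLengthSum_singleton]
    linarith [sqrt_two_pow_add_oneSidedBound_le hle hlt]

/-- Inside a dyadic block of length `2^n`, either `[a, b]` lies in one half, or the midpoint
splits it into two pieces of length at most `2^(n-1)`. -/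
lemma exists_dyadic_split_of_le_block {n q a b : ℕ} (hqa : q * 2 ^ n ≤ a) (hab : a ≤ b)
    (hbq : b ≤ (q + 1) * 2 ^ n) :
    ∃ e l r, l ≤ 2 ^ e ∧ r ≤ 2 ^ e ∧ 2 ^ e ∣ a + l ∧ a + l + r = b := by
  induction n generalizing q with
  | zero => exact ⟨0, 0, b - a, by simp, by simp at hqa hbq; omega, by simp, by omega⟩
  | succ n ih =>
    have hlo : q * 2 ^ (n + 1) = 2 * q * 2 ^ n := by ring
    have hmid : (2 * q + 1) * 2 ^ n = 2 * q * 2 ^ n + 2 ^ n := by ring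
    have hhi : (q + 1) * 2 ^ (n + 1) = (2 * q + 1) * 2 ^ n + 2 ^ n := by ring
    rcases le_or_gt b ((2 * q + 1) * 2 ^ n) with hb | hb
    · exact ih (by omega) hb
    rcases le_or_gt ((2 * q + 1) * 2 ^ n) a with ha | ha
    · exact ih ha (by rw [hhi] at hbq; linarith)
    refine ⟨n, (2 * q + 1) * 2 ^ n - a, b - (2 * q + 1) * 2 ^ n, by omega, by omega, ?_, by omega⟩
    rw [Nat.add_sub_cancel' ha.le]
    exact Dvd.intro_left _ rfl

theorem exists_alignedTiling_sqrtLengthSum_le {a b : ℕ} (hab : a ≤ b) :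
    ∃ L, IsTiling a b L ∧ (∀ p ∈ L, IsAligned p) ∧
      sqrtLengthSum L ≤ dyadicConst * √((b : ℝ) - a) := by
  obtain ⟨e, l, r, hl, hr, hdvd, rfl⟩ :=
    exists_dyadic_split_of_le_block (q := 0) (n := b) (by simp) hab
      (by simpa using (Nat.lt_two_pow_self (n := b)).le)
  obtain ⟨L₁, hL₁, hal₁, hs₁⟩ := exists_alignedTiling_of_dvd_right hdvd hl
  obtain ⟨L₂, hL₂, hal₂, hs₂⟩ := exists_alignedTiling_of_dvd_left hdvd hr
  refine ⟨L₁ ++ L₂, hL₁.append hL₂, ?_, ?_⟩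
  · intro p hp
    exact (List.mem_append.mp hp).elim (hal₁ p) (hal₂ p)
  · have hlen : ((a + l + r : ℕ) : ℝ) - a = l + r := by push_cast; ring
    rw [sqrtLengthSum_append, hlen]
    linarith [oneSidedBound_add_le (Nat.cast_nonneg (α := ℝ) l) (Nat.cast_nonneg r)]

lemma intervalValue_le_tilingValue {α : ℝ} (hα : 0 ≤ α) (f : ℕ → ℝ) {a b : ℕ}
    {L : List (ℕ × ℕ)} (hL : IsTiling a b L)
    (hsum : sqrtLengthSum L ≤ dyadicConst * √((b : ℝ) - a)) :
    intervalValue (dyadicConst * α) f (a, b) ≤ tilingValue α f L := by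
  rw [tilingValue_eq, intervalValue]
  nlinarith [hL.abs_sum_Ico_le f, mul_le_mul_of_nonneg_left hsum hα]

lemma IsTiling.exists_aligned_refinement {α : ℝ} (hα : 0 ≤ α) (f : ℕ → ℝ) {a b : ℕ}
    {L : List (ℕ × ℕ)} (hL : IsTiling a b L) :
    ∃ L', IsTiling a b L' ∧ (∀ p ∈ L', IsAligned p) ∧
      tilingValue (dyadicConst * α) f L ≤ tilingValue α f L' := by
  induction L generalizing a with
  | nil => exact ⟨[], hL, by simp, le_rfl⟩
  | cons p L ih =>
    obtain ⟨rfl, hp, hL⟩ := hL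
    obtain ⟨R, hR, halR, hsR⟩ := exists_alignedTiling_sqrtLengthSum_le hp.le
    obtain ⟨L', hL', halL', hvL'⟩ := ih hL
    refine ⟨R ++ L', hR.append hL', ?_, ?_⟩
    · intro q hq
      exact (List.mem_append.mp hq).elim (halR q) (halL' q)
    · have hpiece := intervalValue_le_tilingValue hα f hR hsR
      rw [Prod.mk.eta] at hpiece
      rw [tilingValue_append, tilingValue, List.map_cons, List.sum_cons]
      exact add_le_add hpiece hvL'

def cutIntervals {k : ℕ} (c : Fin (k + 1) → ℕ) : List (ℕ × ℕ) :=
  List.ofFn fun i : Fin k => (c i.castSucc, c i.succ)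

lemma cutValue_eq_tilingValue (T k : ℕ) (α : ℝ) (s : Fin T → ℝ) (c : Fin (k + 1) → ℕ) :
    cutValue T k α s c = tilingValue α (seqExt s) (cutIntervals c) := by
  rw [tilingValue, cutIntervals, List.map_ofFn, List.sum_ofFn]
  rfl

lemma isTiling_cutIntervals {k : ℕ} {c : Fin (k + 1) → ℕ} (hc : StrictMono c) :
    IsTiling (c 0) (c (Fin.last k)) (cutIntervals c) := by
  induction k with
  | zero => rfl
  | succ k ih =>
    have htail : StrictMono fun i : Fin (k + 1) => c i.succ := hc.comp (Fin.strictMono_succ)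
    rw [cutIntervals, List.ofFn_succ]
    refine ⟨rfl, hc (Fin.succ_pos 0), ?_⟩
    simpa only [cutIntervals, Fin.succ_castSucc, Fin.succ_last] using ih htail

lemma IsCutSeq.isTiling {T k : ℕ} {c : Fin (k + 1) → ℕ} (hc : IsCutSeq T k c) :
    IsTiling 0 T (cutIntervals c) := by
  obtain ⟨hmono, h0, hT⟩ := hc
  simpa only [h0, hT] using isTiling_cutIntervals hmono

lemma IsTiling.exists_eq_cutIntervals {a b : ℕ} {L : List (ℕ × ℕ)} (hL : IsTiling a b L) :
    ∃ k, ∃ c : Fin (k + 1) → ℕ, StrictMono c ∧ c 0 = a ∧ c (Fin.last k) = b ∧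
      cutIntervals c = L := by
  induction L generalizing a with
  | nil => exact ⟨0, fun _ => a, Fin.strictMono_iff_lt_succ.mpr finZeroElim, rfl, hL, rfl⟩
  | cons p L ih =>
    obtain ⟨rfl, hp, hL⟩ := hL
    obtain ⟨k, c, hc, h0, hlast, rfl⟩ := ih hL
    refine ⟨k + 1, Fin.cons p.1 c, ?_, rfl, by rw [← Fin.succ_last, Fin.cons_succ, hlast], ?_⟩
    · refine Fin.strictMono_iff_lt_succ.mpr (Fin.cases ?_ fun i => ?_)
      · simpa [h0] using hp
      · simpa [← Fin.succ_castSucc] using hc (Fin.castSucc_lt_succ (i := i))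
    · simp [cutIntervals, List.ofFn_succ, h0]

theorem P_dyadicConst_mul_le_PA (T : ℕ) {α : ℝ} (hα : 0 ≤ α) (s : Fin T → ℝ) :
    P T (dyadicConst * α) s ≤ PA T α s := by
  have hne : {v : ℝ | ∃ (k : ℕ) (c : Fin (k + 1) → ℕ), IsCutSeq T k c ∧
      v = cutValue T k (dyadicConst * α) s c}.Nonempty :=
    ⟨_, T, fun i => i.val, ⟨Fin.val_strictMono, rfl, rfl⟩, rfl⟩
  have hbdd : BddAbove {v : ℝ | ∃ (k : ℕ) (c : Fin (k + 1) → ℕ), IsCutSeq T k c ∧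
      (∀ i : Fin k, ∃ e j : ℕ, c i.castSucc = j * 2 ^ e ∧ c i.succ = (j + 1) * 2 ^ e) ∧
      v = cutValue T k α s c} := by
    refine ⟨∑ t ∈ Ico 0 T, |seqExt s t|, ?_⟩
    rintro v ⟨k, c, hc, -, rfl⟩
    exact (cutValue_eq_tilingValue ..).trans_le ((IsCutSeq.isTiling hc).tilingValue_le hα _)
  refine csSup_le hne ?_
  rintro v ⟨k, c, hc, rfl⟩
  obtain ⟨L', hL', hal, hle⟩ := (IsCutSeq.isTiling hc).exists_aligned_refinement hα (seqExt s)
  obtain ⟨k', c', hc', h0', hT', rfl⟩ := hL'.exists_eq_cutIntervals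
  rw [cutValue_eq_tilingValue]
  refine hle.trans (le_csSup hbdd ⟨k', c', ⟨hc', h0', hT'⟩, fun i => ?_,
    (cutValue_eq_tilingValue ..).symm⟩)
  exact hal _ (List.mem_ofFn.mpr ⟨i, rfl⟩)

end IntervalPayoff

theorem stmt_18 (m : ℕ) (α : ℝ) (hα : 0 ≤ α)
    (h : (∑ b : Fin (2 ^ m) → Bool, PA (2 ^ m) α (fun t => pmOne (b t))) / 2 ^ (2 ^ m) ≤ 0) :
    (∑ b : Fin (2 ^ m) → Bool,
        P (2 ^ m) (Real.sqrt 2 / (Real.sqrt 2 - 1) * α) (fun t => pmOne (b t))) /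
      2 ^ (2 ^ m) ≤ 0 := by
  refine le_trans ?_ h
  gcongr with b
  exact IntervalPayoff.P_dyadicConst_mul_le_PA _ hα _
end
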